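/- arXiv:0910.1768 — 3 statements merged into one kernel-verified Lean document; each statement's English description precedes it below -/
import Mathlib

section
/- Let δ = ∏_{i=1}^p (i^T i^B) ∈ S_{2p}. A permutation α lies on the geodesic from the identity to δ (i.e. |α| + |αδ⁻¹| = |δ| = p) if and only if there exists a subset A ⊆ {1,…,p} such that α = ∏_{i∈A} (i^T i^B). -/
open Equiv

/-- Number of cycles of a permutation, counting fixed points as cycles. -/
def numCycles {α : Type*} [Fintype α] [DecidableEq α] (σ : Equiv.Perm α) : ℕ :=
  σ.cycleType.card + (Fintype.card α - σ.support.card)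

/-- Transposition length \`|σ| = card α - #σ\`. -/
def permLength {α : Type*} [Fintype α] [DecidableEq α] (σ : Equiv.Perm α) : ℕ :=
  Fintype.card α - numCycles σ

/-- \`S_{2p}\` acting on the symbols \`{1ᵀ,…,pᵀ,1ᴮ,…,pᴮ}\`: top indices are \`Sum.inl\`,
bottom indices are \`Sum.inr\`. \`δ = ∏ᵢ (iᵀ iᴮ)\` swaps top and bottom. -/
def deltaPerm (p : ℕ) : Perm (Fin p ⊕ Fin p) := Equiv.sumComm (Fin p) (Fin p)

/-!
Every cycle has length at least two, so `2 |σ| ≥ #supp σ`, with equality for involutions.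
If `|α| + |αδ⁻¹| = p` and `δ` moves all `2p` points, then the supports of `α` and `αδ⁻¹`
cover everything with total size at most `2p`, hence are disjoint; this forces `α x ∈ {x, δ x}`
for every `x`, i.e. `α` is a product of some of the transpositions `(iᵀ iᴮ)`. Conversely such
products and their complements `αδ⁻¹` are involutions with supports of size `2|A|` and
`2(p - |A|)`.
-/

open Finset

namespace Equiv.Perm

variable {X : Type*} [Fintype X] [DecidableEq X]

theorem two_mul_card_cycleType_le_card_support (σ : Perm X) :
    2 * σ.cycleType.card ≤ #σ.support := by
  rw [← sum_cycleType, mul_comm, ← smul_eq_mul]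
  exact Multiset.card_nsmul_le_sum fun _ hn => two_le_of_mem_cycleType hn

theorem permLength_eq_card_support_sub (σ : Perm X) :
    permLength σ = #σ.support - σ.cycleType.card := by
  have := card_le_univ σ.support
  unfold permLength numCycles
  omega

theorem card_support_le_two_mul_permLength (σ : Perm X) : #σ.support ≤ 2 * permLength σ := by
  have := σ.two_mul_card_cycleType_le_card_support
  rw [permLength_eq_card_support_sub]
  omega

theorem two_mul_permLength_of_sq_eq_one {σ : Perm X} (hσ : σ ^ 2 = 1) :
    2 * permLength σ = #σ.support := by
  have hsum : #σ.support = 2 * σ.cycleType.card := by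
    rw [← sum_cycleType, cycleType_of_pow_prime_eq_one hσ, Multiset.sum_replicate,
      Multiset.card_replicate, smul_eq_mul, mul_comm]
  rw [permLength_eq_card_support_sub]
  omega

theorem apply_eq_self_or_eq_of_permLength_add_le {α δ : Perm X} (hδ : δ.support = univ)
    (h : 2 * (permLength α + permLength (α * δ⁻¹)) ≤ Fintype.card X) (x : X) :
    α x = x ∨ α x = δ x := by
  set β := α * δ⁻¹
  have hcover : α.support ∪ β.support = univ := by
    refine eq_univ_of_forall fun y => ?_
    by_contra hy
    simp only [mem_union, mem_support, not_or, not_not] at hy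
    have hδy : δ⁻¹ y = y := α.injective (by simpa [β, hy.1] using hy.2)
    have : y ∈ δ.support := hδ ▸ mem_univ y
    exact mem_support.mp this (by simpa using congrArg δ hδy.symm)
  have hdisj : _root_.Disjoint α.support β.support := by
    rw [← card_union_eq_card_add_card]
    have := α.card_support_le_two_mul_permLength
    have := β.card_support_le_two_mul_permLength
    have := card_union_le α.support β.support
    rw [hcover, card_univ] at *
    omega
  by_cases hx : α x = x
  · exact Or.inl hx
  · have hαx : α x ∈ α.support := apply_mem_support.mpr (mem_support.mpr hx)
    have hβαx : α (δ⁻¹ (α x)) = α x := notMem_support.mp (disjoint_left.mp hdisj hαx)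
    exact Or.inr (inv_eq_iff_eq.mp (α.injective hβαx))

end Equiv.Perm

open Equiv.Perm

section PairSwaps

variable {p : ℕ}

/-- `α = ∏_{i ∈ A} (iᵀ iᴮ)`, stated pointwise. -/
def IsPairSwapProd (A : Finset (Fin p)) (α : Perm (Fin p ⊕ Fin p)) : Prop :=
  ∀ i : Fin p,
    (α (Sum.inl i) = if i ∈ A then Sum.inr i else Sum.inl i) ∧
    (α (Sum.inr i) = if i ∈ A then Sum.inl i else Sum.inr i)

namespace IsPairSwapProd

variable {A : Finset (Fin p)} {α : Perm (Fin p ⊕ Fin p)}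

theorem sq_eq_one (hA : IsPairSwapProd A α) : α ^ 2 = 1 := by
  ext (i | i) <;> by_cases hi : i ∈ A <;> simp [sq, hA i, hi]

theorem support_eq (hA : IsPairSwapProd A α) : α.support = A.disjSum A := by
  ext (i | i) <;> by_cases hi : i ∈ A <;> simp [hA i, hi]

theorem permLength_eq (hA : IsPairSwapProd A α) : permLength α = #A := by
  have := two_mul_permLength_of_sq_eq_one hA.sq_eq_one
  rw [hA.support_eq, card_disjSum] at this
  omega

theorem mul_deltaPerm_inv (hA : IsPairSwapProd A α) :
    IsPairSwapProd Aᶜ (α * (deltaPerm p)⁻¹) := by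
  intro i
  by_cases hi : i ∈ A <;> simp [deltaPerm, hA i, hi]

end IsPairSwapProd

theorem isPairSwapProd_univ_deltaPerm (p : ℕ) : IsPairSwapProd univ (deltaPerm p) :=
  fun _ => by simp [deltaPerm]

theorem support_deltaPerm (p : ℕ) : (deltaPerm p).support = univ := by
  ext (i | i) <;> simp [deltaPerm]

theorem isPairSwapProd_of_forall_apply_eq_or {α : Perm (Fin p ⊕ Fin p)}
    (h : ∀ x, α x = x ∨ α x = deltaPerm p x) :
    IsPairSwapProd {i | α (Sum.inl i) = Sum.inr i} α := by
  intro i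
  have hl := h (Sum.inl i)
  have hr := h (Sum.inr i)
  simp only [deltaPerm, sumComm_apply, Sum.swap_inl, Sum.swap_inr] at hl hr
  by_cases hi : α (Sum.inl i) = Sum.inr i
  · have : α (Sum.inr i) ≠ Sum.inr i := fun e => by simpa using α.injective (hi.trans e.symm)
    simp [hi, hr.resolve_left this]
  · have : α (Sum.inr i) ≠ Sum.inl i := fun e =>
      by simpa using α.injective ((hl.resolve_right hi).trans e.symm)
    simp [hl.resolve_right hi, hr.resolve_right this]

end PairSwaps

/-- `α` lies on the geodesic from the identity to `δ` iff `α = ∏_{i ∈ A} (iᵀ iᴮ)`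
for some subset `A ⊆ {1,…,p}`. -/
theorem geodesic_to_delta_iff (p : ℕ) :
    permLength (deltaPerm p) = p ∧
    ∀ α : Perm (Fin p ⊕ Fin p),
      permLength α + permLength (α * (deltaPerm p)⁻¹) = p ↔
      ∃ A : Finset (Fin p), ∀ i : Fin p,
        (α (Sum.inl i) = if i ∈ A then Sum.inr i else Sum.inl i) ∧
        (α (Sum.inr i) = if i ∈ A then Sum.inl i else Sum.inr i) := by
  refine ⟨by simpa using (isPairSwapProd_univ_deltaPerm p).permLength_eq,
    fun α => ⟨fun h => ⟨_, isPairSwapProd_of_forall_apply_eq_or fun x => ?_⟩, ?_⟩⟩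
  · refine apply_eq_self_or_eq_of_permLength_add_le (support_deltaPerm p) ?_ x
    simp [h, two_mul]
  · rintro ⟨A, hA : IsPairSwapProd A α⟩
    have hAp : #A ≤ p := A.card_le_univ.trans_eq (Fintype.card_fin p)
    rw [hA.permLength_eq, hA.mul_deltaPerm_inv.permLength_eq, card_compl, Fintype.card_fin]
    omega
end

section
/- Let ν_n be a sequence of probability measures on ℝ converging in moments to a compactly supported probability measure ν (i.e. ∫x^p dν_n → ∫x^p dν for every nonnegative integer p, and all these moments are finite). Then for every continuous function f : ℝ → ℝ of polynomial growth (i.e. |f(x)| ≤ C(1+|x|^q) for some C, q), ∫ f dν_n → ∫ f dν. -/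
open MeasureTheory Filter

/-! Let `νlim` live on `[-R, R]` and approximate `f` by a polynomial `P` within `ε` on `[-2R, 2R]`.
Because `f - P` grows polynomially, `|f - P| - ε` is dominated everywhere by the polynomial
`c (x / 2R)^(2k)` once `2k` exceeds the growth exponent, and on `[-R, R]` this polynomial is at most
`c 4^(-k)`, which is small for large `k`. Integrals of polynomials converge by moment convergence,
so `∫ f dν_n` and `∫ f dνlim` are both close to the convergent sequence `∫ P dν_n` and its limit. -/

def HasPolynomialGrowth (f : ℝ → ℝ) : Prop :=
  ∃ (C : ℝ) (q : ℕ), ∀ x, |f x| ≤ C * (1 + |x| ^ q)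

lemma one_add_pow_abs_le_two_mul (x : ℝ) {i n : ℕ} (h : i ≤ n) :
    1 + |x| ^ i ≤ 2 * (1 + |x| ^ n) := by
  rcases le_or_gt |x| 1 with hx | hx
  · linarith [pow_le_one₀ (abs_nonneg x) hx (n := i), pow_nonneg (abs_nonneg x) n]
  · linarith [pow_le_pow_right₀ hx.le h, one_le_pow₀ hx.le (n := n)]

lemma nonneg_of_abs_le_mul_one_add_pow {f : ℝ → ℝ} {C : ℝ} {q : ℕ}
    (hf : ∀ x, |f x| ≤ C * (1 + |x| ^ q)) : 0 ≤ C := by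
  have := hf 0
  have : (0 : ℝ) < 1 + |0| ^ q := by positivity
  nlinarith [abs_nonneg (f 0)]

namespace HasPolynomialGrowth

lemma add {f g : ℝ → ℝ} (hf : HasPolynomialGrowth f) (hg : HasPolynomialGrowth g) :
    HasPolynomialGrowth (fun x => f x + g x) := by
  obtain ⟨C, q, hC⟩ := hf
  obtain ⟨D, r, hD⟩ := hg
  refine ⟨2 * C + 2 * D, max q r, fun x => ?_⟩
  have hC₀ := nonneg_of_abs_le_mul_one_add_pow hC
  have hD₀ := nonneg_of_abs_le_mul_one_add_pow hD
  have hq := one_add_pow_abs_le_two_mul x (le_max_left q r)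
  have hr := one_add_pow_abs_le_two_mul x (le_max_right q r)
  calc |f x + g x| ≤ C * (1 + |x| ^ q) + D * (1 + |x| ^ r) := (abs_add_le _ _).trans
        (add_le_add (hC x) (hD x))
    _ ≤ C * (2 * (1 + |x| ^ max q r)) + D * (2 * (1 + |x| ^ max q r)) := by gcongr
    _ = (2 * C + 2 * D) * (1 + |x| ^ max q r) := by ring

lemma const_mul {f : ℝ → ℝ} (hf : HasPolynomialGrowth f) (a : ℝ) :
    HasPolynomialGrowth (fun x => a * f x) := by
  obtain ⟨C, q, hC⟩ := hf
  refine ⟨|a| * C, q, fun x => ?_⟩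
  rw [abs_mul, mul_assoc]
  exact mul_le_mul_of_nonneg_left (hC x) (abs_nonneg a)

lemma sub {f g : ℝ → ℝ} (hf : HasPolynomialGrowth f) (hg : HasPolynomialGrowth g) :
    HasPolynomialGrowth (fun x => f x - g x) := by
  simpa [sub_eq_add_neg] using hf.add (hg.const_mul (-1))

lemma integrable {μ : Measure ℝ} [IsFiniteMeasure μ] {f : ℝ → ℝ} (hf : HasPolynomialGrowth f)
    (hfm : AEStronglyMeasurable f μ) (hmom : ∀ p : ℕ, Integrable (fun x => x ^ p) μ) :
    Integrable f μ := by
  obtain ⟨C, q, hC⟩ := hf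
  have hbound : Integrable (fun x => C * (1 + |x| ^ q)) μ := by
    refine ((integrable_const 1).add ?_).const_mul C
    simpa only [abs_pow] using (hmom q).abs
  exact hbound.mono' hfm (Eventually.of_forall hC)

end HasPolynomialGrowth

lemma hasPolynomialGrowth_pow (n : ℕ) : HasPolynomialGrowth (fun x => x ^ n) :=
  ⟨1, n, fun x => by rw [abs_pow, one_mul]; linarith⟩

lemma Polynomial.hasPolynomialGrowth_eval (P : Polynomial ℝ) :
    HasPolynomialGrowth (fun x => P.eval x) := by
  induction P using Polynomial.induction_on' with
  | add p q hp hq => simpa only [Polynomial.eval_add] using hp.add hq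
  | monomial n a =>
    simpa only [Polynomial.eval_monomial] using (hasPolynomialGrowth_pow n).const_mul a

lemma Polynomial.integrable_eval {μ : Measure ℝ} (hmom : ∀ p : ℕ, Integrable (fun x => x ^ p) μ)
    (P : Polynomial ℝ) : Integrable (fun x => P.eval x) μ := by
  induction P using Polynomial.induction_on' with
  | add p q hp hq =>
    simp only [Polynomial.eval_add]
    exact hp.add hq
  | monomial n a => simpa only [Polynomial.eval_monomial] using (hmom n).const_mul a

lemma Polynomial.tendsto_integral_eval_of_tendsto_moments {ι : Type*} {l : Filter ι}
    {ν : ι → Measure ℝ} {νlim : Measure ℝ}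
    (hint : ∀ i (p : ℕ), Integrable (fun x => x ^ p) (ν i))
    (hintlim : ∀ p : ℕ, Integrable (fun x => x ^ p) νlim)
    (hmom : ∀ p : ℕ, Tendsto (fun i => ∫ x, x ^ p ∂(ν i)) l (nhds (∫ x, x ^ p ∂νlim)))
    (P : Polynomial ℝ) :
    Tendsto (fun i => ∫ x, P.eval x ∂(ν i)) l (nhds (∫ x, P.eval x ∂νlim)) := by
  induction P using Polynomial.induction_on' with
  | add p q hp hq =>
    simp only [Polynomial.eval_add]
    rw [integral_add (p.integrable_eval hintlim) (q.integrable_eval hintlim)]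
    refine (hp.add hq).congr fun i => ?_
    rw [integral_add (p.integrable_eval (hint i)) (q.integrable_eval (hint i))]
  | monomial n a =>
    simp only [Polynomial.eval_monomial, integral_const_mul]
    exact (hmom n).const_mul a

lemma abs_le_add_mul_div_pow_of_abs_le_on_Icc {g : ℝ → ℝ} {C δ M : ℝ} {q n : ℕ}
    (hg : ∀ x, |g x| ≤ C * (1 + |x| ^ q)) (hM : 0 < M) (hgM : ∀ x ∈ Set.Icc (-M) M, |g x| ≤ δ)
    (hqn : q ≤ n) (hn : Even n) (x : ℝ) :
    |g x| ≤ δ + C * (1 + M ^ q) * (x / M) ^ n := by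
  have hC := nonneg_of_abs_le_mul_one_add_pow hg
  have hδ : 0 ≤ δ := (abs_nonneg _).trans (hgM 0 ⟨by linarith, hM.le⟩)
  rw [← hn.pow_abs, abs_div, abs_of_pos hM]
  by_cases hx : |x| ≤ M
  · have := hgM x (abs_le.mp hx)
    have : 0 ≤ C * (1 + M ^ q) * (|x| / M) ^ n := by positivity
    linarith
  · set t := |x| / M
    have ht : 1 ≤ t := (one_le_div hM).mpr (le_of_not_ge hx)
    have hxt : |x| = M * t := by rw [mul_div_cancel₀ _ hM.ne']
    have hpow : 1 + |x| ^ q ≤ (1 + M ^ q) * t ^ n := by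
      rw [hxt, mul_pow, add_mul, one_mul]
      gcongr
      · exact one_le_pow₀ ht
    calc |g x| ≤ C * (1 + |x| ^ q) := hg x
      _ ≤ C * ((1 + M ^ q) * t ^ n) := mul_le_mul_of_nonneg_left hpow hC
      _ ≤ δ + C * (1 + M ^ q) * t ^ n := by linarith

lemma HasPolynomialGrowth.exists_polynomial_majorant {g : ℝ → ℝ} (hg : HasPolynomialGrowth g)
    {δ R η : ℝ} (hR : 0 < R) (hgR : ∀ x ∈ Set.Icc (-(2 * R)) (2 * R), |g x| ≤ δ) (hη : 0 < η) :
    ∃ Q : Polynomial ℝ, (∀ x, |g x| ≤ δ + Q.eval x) ∧ ∀ x, |x| ≤ R → |Q.eval x| ≤ η := by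
  obtain ⟨C, q, hC⟩ := hg
  set c := C * (1 + (2 * R) ^ q)
  have hc : 0 ≤ c := by have := nonneg_of_abs_le_mul_one_add_pow hC; positivity
  obtain ⟨k, hk, hqk⟩ : ∃ k : ℕ, c * (1 / 4) ^ k ≤ η ∧ q ≤ k := by
    have : Tendsto (fun k : ℕ => c * (1 / 4 : ℝ) ^ k) atTop (nhds 0) := by
      simpa using (tendsto_pow_atTop_nhds_zero_of_lt_one (r := (1 / 4 : ℝ)) (by norm_num)
        (by norm_num)).const_mul c
    exact ((this.eventually (ge_mem_nhds hη)).and (eventually_ge_atTop q)).exists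
  refine ⟨Polynomial.C c * (Polynomial.X * Polynomial.C (2 * R)⁻¹) ^ (2 * k), fun x => ?_,
    fun x hx => ?_⟩
  · simpa [div_eq_mul_inv] using abs_le_add_mul_div_pow_of_abs_le_on_Icc hC (by positivity) hgR
      (by omega) (even_two_mul k) x
  · have hx2 : (x * (2 * R)⁻¹) ^ 2 ≤ 1 / 4 := by
      rw [mul_pow, inv_pow, ← div_eq_mul_inv, div_le_iff₀ (by positivity)]
      nlinarith [sq_abs x, abs_nonneg x]
    simp only [Polynomial.eval_mul, Polynomial.eval_pow, Polynomial.eval_C, Polynomial.eval_X]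
    rw [abs_of_nonneg (mul_nonneg hc ((even_two_mul k).pow_nonneg _))]
    calc c * (x * (2 * R)⁻¹) ^ (2 * k) = c * ((x * (2 * R)⁻¹) ^ 2) ^ k := by rw [pow_mul]
      _ ≤ c * (1 / 4) ^ k := by gcongr
      _ ≤ η := hk

lemma abs_integral_sub_le_of_abs_sub_le {α : Type*} [MeasurableSpace α] {μ : Measure α}
    [IsProbabilityMeasure μ] {f g w : α → ℝ} {δ : ℝ} (hf : Integrable f μ) (hg : Integrable g μ)
    (hw : Integrable w μ) (h : ∀ x, |f x - g x| ≤ δ + w x) :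
    |∫ x, f x ∂μ - ∫ x, g x ∂μ| ≤ δ + ∫ x, w x ∂μ := by
  rw [← integral_sub hf hg]
  calc |∫ x, f x - g x ∂μ| ≤ ∫ x, δ + w x ∂μ :=
        norm_integral_le_of_norm_le (f := fun x => f x - g x) (g := fun x => δ + w x)
          ((integrable_const δ).add hw) (Eventually.of_forall h)
    _ = δ + ∫ x, w x ∂μ := by rw [integral_add (integrable_const δ) hw, integral_const]; simp

lemma tendsto_of_forall_approx {ι α : Type*} [PseudoMetricSpace α] {l : Filter ι}
    {a : ι → α} {a₀ : α}
    (h : ∀ ε > 0, ∃ (b : ι → α) (b₀ : α), Tendsto b l (nhds b₀) ∧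
      (∀ᶠ i in l, dist (a i) (b i) ≤ ε) ∧ dist a₀ b₀ ≤ ε) :
    Tendsto a l (nhds a₀) := by
  refine Metric.tendsto_nhds.mpr fun ε hε => ?_
  obtain ⟨b, b₀, hb, hab, hab₀⟩ := h (ε / 3) (by positivity)
  filter_upwards [hab, Metric.tendsto_nhds.mp hb (ε / 3) (by positivity)] with i hai hbi
  calc dist (a i) a₀ ≤ dist (a i) (b i) + dist (b i) b₀ + dist b₀ a₀ := dist_triangle4 _ _ _ _
    _ < ε := by rw [dist_comm b₀]; linarith

/-- If probability measures `ν n` converge in moments to a compactly supported probability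
measure `ν`, then `∫ f dν_n → ∫ f dν` for every continuous `f` of polynomial growth. -/
theorem tendsto_integral_of_moments (ν : ℕ → Measure ℝ) (νlim : Measure ℝ)
    [∀ n, IsProbabilityMeasure (ν n)] [IsProbabilityMeasure νlim]
    (hint : ∀ n (p : ℕ), Integrable (fun x => x ^ p) (ν n))
    (hintlim : ∀ p : ℕ, Integrable (fun x => x ^ p) νlim)
    (hcpt : ∃ s : Set ℝ, IsCompact s ∧ νlim sᶜ = 0)
    (hmom : ∀ p : ℕ,
      Tendsto (fun n => ∫ x, x ^ p ∂(ν n)) atTop (nhds (∫ x, x ^ p ∂νlim)))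
    (f : ℝ → ℝ) (hf : Continuous f)
    (hgrowth : ∃ (C : ℝ) (q : ℕ), ∀ x : ℝ, |f x| ≤ C * (1 + |x| ^ q)) :
    Tendsto (fun n => ∫ x, f x ∂(ν n)) atTop (nhds (∫ x, f x ∂νlim)) := by
  obtain ⟨s, hs, hsν⟩ := hcpt
  obtain ⟨R, hR, hsR⟩ := hs.isBounded.exists_pos_norm_le
  have hsupp : ∀ᵐ x ∂νlim, |x| ≤ R := by
    filter_upwards [mem_ae_iff.mpr hsν] with x hx using hsR x hx
  have hpoly := Polynomial.tendsto_integral_eval_of_tendsto_moments hint hintlim hmom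
  refine tendsto_of_forall_approx fun ε hε => ?_
  obtain ⟨P, hP⟩ := exists_polynomial_near_of_continuousOn (-(2 * R)) (2 * R) f
    hf.continuousOn (ε / 2) (by positivity)
  obtain ⟨Q, hfPQ, hQR⟩ := (HasPolynomialGrowth.sub hgrowth P.hasPolynomialGrowth_eval)
    |>.exists_polynomial_majorant hR (fun x hx => by rw [abs_sub_comm]; exact (hP x hx).le)
      (η := ε / 4) (by positivity)
  have hQlim : ∫ x, Q.eval x ∂νlim ≤ ε / 4 := by
    have := norm_integral_le_of_norm_le_const (μ := νlim) (f := fun x => Q.eval x)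
      (hsupp.mono hQR)
    rw [probReal_univ, mul_one] at this
    exact (le_abs_self _).trans this
  have hfP : ∀ (μ : Measure ℝ) [IsProbabilityMeasure μ],
      (∀ p : ℕ, Integrable (fun x => x ^ p) μ) →
      |∫ x, f x ∂μ - ∫ x, P.eval x ∂μ| ≤ ε / 2 + ∫ x, Q.eval x ∂μ := fun μ _ hμ =>
    abs_integral_sub_le_of_abs_sub_le (HasPolynomialGrowth.integrable hgrowth
      hf.aestronglyMeasurable hμ) (P.integrable_eval hμ) (Q.integrable_eval hμ) hfPQ
  have hQ : ∫ x, Q.eval x ∂νlim < ε / 2 := by linarith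
  refine ⟨_, _, hpoly P, ?_, ?_⟩
  · filter_upwards [(hpoly Q).eventually (gt_mem_nhds hQ)] with n hn
    rw [Real.dist_eq]
    linarith [hfP (ν n) (hint n)]
  · rw [Real.dist_eq]
    linarith [hfP νlim hintlim]
end

section
/- Let γ₂ = (p, p−1, …, 1)(2p, 2p−1, …, p+1) ∈ S_{2p}. A permutation α ∈ S_{2p} satisfies |α| + |γ₂⁻¹α| = |γ₂| = 2p−2 if and only if α decomposes as α = α′ ⊕ α″ with α′ ∈ S{1,…,p}, α″ ∈ S{p+1,…,2p}, where α′ and α″ lie on the geodesics from the identity to the respective p-cycles; moreover in that case #α = #α′ + #α″. -/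
open Equiv

/-- `γ₂ = (p ⋯ 2 1)(2p ⋯ p+2 p+1)`, a product of two disjoint descending `p`-cycles. -/
def gammaTwo (p : ℕ) : Perm (Fin p ⊕ Fin p) :=
  Equiv.sumCongr ((finRotate p)⁻¹) ((finRotate p)⁻¹)

/-
Write `#σ` for the number of cycles, so `|σ| = n - #σ`. Factor `σ` into `|σ|` transpositions
(each `swap x (σ x)` splits a cycle, so this is possible) and, starting from the cycle partition
of `τ`, join for each transposition `(a b)` the blocks of `a` and `b`. The resulting partition `J`
is coarser than the cycle partitions of both `τ` and `στ` and has at least `#τ - |σ|` blocks, so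
`#τ - |σ| ≤ #J ≤ #στ`: this is `|στ| ≤ |σ| + |τ|`, and in the case of equality the cycles of `στ`
are exactly the blocks of `J`, hence unions of cycles of `τ`. For `α` on a geodesic to `γ₂` every
cycle of `α` therefore lies in one of the two `p`-cycles of `γ₂`, so `α = α' ⊕ α''`, and the
length condition splits blockwise because `|·|` and `#` are additive over `⊕`.
-/

open Equiv.Perm

namespace Setoid

variable {α : Type*}

-- Joins the classes of `a` and `b` by collapsing the class of `b` onto that of `a`.
open Classical in
noncomputable def merge (S : Setoid α) (a b : α) : Setoid α :=
  ker ((fun c => if c = Quotient.mk S b then Quotient.mk S a else c) ∘ Quotient.mk S)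

open Classical in
theorem le_merge (S : Setoid α) (a b : α) : S ≤ S.merge a b := fun _ _ h =>
  congrArg (fun c => if c = Quotient.mk S b then Quotient.mk S a else c) (Quotient.sound h)

theorem merge_rel (S : Setoid α) (a b : α) : S.merge a b a b := by
  rw [merge, ker_def]
  simp

theorem rel_swap_apply [DecidableEq α] {S : Setoid α} {a b : α} (hab : S a b) (x : α) :
    S x (swap a b x) := by
  rcases eq_or_ne x a with rfl | hxa
  · simpa using hab
  rcases eq_or_ne x b with rfl | hxb
  · simpa using S.symm hab
  · simp [swap_apply_of_ne_of_ne hxa hxb]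

theorem card_quotient_le_card_quotient_merge_add_one [Finite α] (S : Setoid α) (a b : α) :
    Nat.card (Quotient S) ≤ Nat.card (Quotient (S.merge a b)) + 1 := by
  rw [merge, Nat.card_congr (quotientKerEquivRange _), ← Set.ncard_univ]
  refine (Set.ncard_le_ncard fun c _ => ?_).trans (Set.ncard_insert_le (Quotient.mk S b) _)
  induction c using Quotient.ind with
  | _ x =>
    by_cases hx : Quotient.mk S x = Quotient.mk S b
    · exact .inl hx
    · exact .inr ⟨x, if_neg hx⟩

theorem card_quotient_le_of_le [Finite α] {S T : Setoid α} (h : S ≤ T) :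
    Nat.card (Quotient T) ≤ Nat.card (Quotient S) :=
  Nat.card_le_card_of_surjective (map_of_le h) (Quotient.ind fun x => ⟨Quotient.mk S x, rfl⟩)

theorem eq_of_le_of_card_quotient_eq [Finite α] {S T : Setoid α} (h : S ≤ T)
    (hc : Nat.card (Quotient T) = Nat.card (Quotient S)) : S = T := by
  have hinj := ((Nat.bijective_iff_surjective_and_card (map_of_le h)).2
    ⟨Quotient.ind fun x => ⟨Quotient.mk S x, rfl⟩, hc.symm⟩).1
  exact le_antisymm h fun {x y} hxy => Quotient.exact (hinj (Quotient.sound hxy))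

end Setoid

namespace Equiv.Perm

variable {β : Type*}

@[simp]
theorem sameCycle_setoid_apply {σ : Perm β} {x y : β} :
    SameCycle.setoid σ x y ↔ σ.SameCycle x y :=
  Iff.rfl

theorem sameCycle_setoid_le_iff {σ : Perm β} {S : Setoid β} :
    SameCycle.setoid σ ≤ S ↔ ∀ x, S x (σ x) := by
  refine ⟨fun h x => h (sameCycle_apply_right.2 (SameCycle.refl σ x)), fun h => ?_⟩
  rintro x _ ⟨i, rfl⟩
  induction i using Int.induction_on with
  | zero => exact S.refl' x
  | succ i ih => rw [add_comm, zpow_one_add, mul_apply]; exact S.trans' ih (h _)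
  | pred i ih =>
    rw [sub_eq_neg_add, zpow_add, zpow_neg_one, mul_apply]
    have hinv : S (σ⁻¹ ((σ ^ (-(i : ℤ))) x)) ((σ ^ (-(i : ℤ))) x) := by
      simpa using h (σ⁻¹ ((σ ^ (-(i : ℤ))) x))
    exact S.trans' ih (S.symm' hinv)

theorem sameCycle_setoid_swap_mul_le [DecidableEq β] {ρ : Perm β} {S : Setoid β} {a b : β}
    (hab : S a b) (hρ : SameCycle.setoid ρ ≤ S) : SameCycle.setoid (swap a b * ρ) ≤ S :=
  sameCycle_setoid_le_iff.2 fun x =>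
    S.trans' (sameCycle_setoid_le_iff.1 hρ x) (Setoid.rel_swap_apply hab _)

section SumCongr

variable {γ δ : Type*}

theorem sumCongr_zpow (f : Perm γ) (g : Perm δ) (i : ℤ) :
    sumCongr f g ^ i = sumCongr (f ^ i) (g ^ i) :=
  (map_zpow (sumCongrHom γ δ) (f, g) i).symm

@[simp]
theorem sameCycle_sumCongr_inl {f : Perm γ} {g : Perm δ} {x y : γ} :
    (sumCongr f g).SameCycle (.inl x) (.inl y) ↔ f.SameCycle x y := by
  simp [SameCycle, sumCongr_zpow]

@[simp]
theorem sameCycle_sumCongr_inr {f : Perm γ} {g : Perm δ} {x y : δ} :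
    (sumCongr f g).SameCycle (.inr x) (.inr y) ↔ g.SameCycle x y := by
  simp [SameCycle, sumCongr_zpow]

@[simp]
theorem not_sameCycle_sumCongr_inl_inr {f : Perm γ} {g : Perm δ} {x : γ} {y : δ} :
    ¬(sumCongr f g).SameCycle (.inl x) (.inr y) := by
  simp [SameCycle, sumCongr_zpow]

end SumCongr

variable [Fintype β] [DecidableEq β]

theorem numCycles_eq_card_quotient (σ : Perm β) :
    numCycles σ = Nat.card (Quotient (SameCycle.setoid σ)) := by
  let f : β → σ.cycleFactorsFinset ⊕ ↥(σ.supportᶜ) := fun x =>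
    if hx : x ∈ σ.support then .inl ⟨σ.cycleOf x, cycleOf_mem_cycleFactorsFinset_iff.2 hx⟩
    else .inr ⟨x, Finset.mem_compl.2 hx⟩
  have hf : Function.Surjective f := by
    rintro (⟨c, hc⟩ | ⟨x, hx⟩)
    · obtain ⟨a, ha⟩ := (mem_cycleFactorsFinset_iff.1 hc).1.nonempty_support
      refine ⟨a, ?_⟩
      simp only [f, dif_pos (mem_cycleFactorsFinset_support_le hc ha), ← cycle_is_cycleOf ha hc]
    · exact ⟨x, by simp only [f, dif_neg (Finset.mem_compl.1 hx)]⟩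
  have hker : SameCycle.setoid σ = Setoid.ker f := by
    ext x y
    rw [Setoid.ker_def]
    by_cases hx : x ∈ σ.support <;> by_cases hy : y ∈ σ.support
    · simp only [f, dif_pos hx, dif_pos hy, Sum.inl.injEq, Subtype.mk.injEq]
      exact sameCycle_iff_cycleOf_eq_of_mem_support hx hy
    · simp only [f, dif_pos hx, dif_neg hy, reduceCtorEq, iff_false]
      exact fun h => hy (h.eq_of_right (notMem_support.1 hy) ▸ hx)
    · simp only [f, dif_neg hx, dif_pos hy, reduceCtorEq, iff_false]
      exact fun h => hx ((h.eq_of_left (notMem_support.1 hx)).symm ▸ hy)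
    · simp only [f, dif_neg hx, dif_neg hy, Sum.inr.injEq, Subtype.mk.injEq]
      exact ⟨fun h => h.eq_of_left (notMem_support.1 hx), fun h => h ▸ SameCycle.refl σ x⟩
  rw [hker, Nat.card_congr (Setoid.quotientKerEquivOfSurjective f hf), Nat.card_sum,
    Nat.card_eq_fintype_card, Nat.card_eq_fintype_card, Fintype.card_coe, Fintype.card_coe,
    numCycles, cycleType_def, Multiset.card_map, Finset.card_compl]
  rfl

theorem numCycles_le_card (σ : Perm β) : numCycles σ ≤ Fintype.card β := by
  rw [numCycles_eq_card_quotient, ← Nat.card_eq_fintype_card]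
  exact Nat.card_le_card_of_surjective _ Quotient.mk_surjective

theorem permLength_add_numCycles (σ : Perm β) : permLength σ + numCycles σ = Fintype.card β :=
  Nat.sub_add_cancel (numCycles_le_card σ)

theorem permLength_swap_mul_lt {σ : Perm β} {x : β} (hx : σ x ≠ x) :
    permLength (swap x (σ x) * σ) < permLength σ := by
  set τ := swap x (σ x) * σ
  have hle : SameCycle.setoid τ ≤ SameCycle.setoid σ :=
    sameCycle_setoid_swap_mul_le (sameCycle_apply_right.2 (SameCycle.refl σ x)) le_rfl
  have hne : SameCycle.setoid τ ≠ SameCycle.setoid σ := fun h => by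
    have hτx : τ x = x := by simp [τ]
    have hxσx : τ.SameCycle x (σ x) := by
      change SameCycle.setoid τ x (σ x)
      rw [h]
      exact sameCycle_apply_right.2 (SameCycle.refl σ x)
    exact hx (hxσx.eq_of_left hτx).symm
  have hcard : numCycles σ < numCycles τ := by
    rw [numCycles_eq_card_quotient, numCycles_eq_card_quotient]
    exact (Setoid.card_quotient_le_of_le hle).lt_of_ne
      fun hc => hne (Setoid.eq_of_le_of_card_quotient_eq hle hc)
  have := permLength_add_numCycles σ
  have := permLength_add_numCycles τ
  omega

theorem exists_setoid_le_card_quotient_add_permLength (σ ρ : Perm β) {S : Setoid β}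
    (hS : SameCycle.setoid ρ ≤ S) :
    ∃ J : Setoid β, S ≤ J ∧ SameCycle.setoid (σ * ρ) ≤ J ∧
      Nat.card (Quotient S) ≤ Nat.card (Quotient J) + permLength σ := by
  by_cases hσ : σ = 1
  · exact ⟨S, le_rfl, by rwa [hσ, one_mul], Nat.le_add_right _ _⟩
  obtain ⟨x, hx⟩ : ∃ x, σ x ≠ x := not_forall.1 fun h => hσ (Equiv.ext h)
  have hlt := permLength_swap_mul_lt hx
  obtain ⟨J, hSJ, hJ, hcard⟩ :=
    exists_setoid_le_card_quotient_add_permLength (swap x (σ x) * σ) ρ hS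
  refine ⟨J.merge x (σ x), hSJ.trans (J.le_merge _ _), ?_, ?_⟩
  · have hσρ : σ * ρ = swap x (σ x) * (swap x (σ x) * σ * ρ) := by
      rw [← mul_assoc, ← mul_assoc, swap_mul_self, one_mul]
    rw [hσρ]
    exact sameCycle_setoid_swap_mul_le (J.merge_rel _ _) (hJ.trans (J.le_merge _ _))
  · have := J.card_quotient_le_card_quotient_merge_add_one x (σ x)
    omega
termination_by permLength σ

theorem permLength_mul_le (σ τ : Perm β) : permLength (σ * τ) ≤ permLength σ + permLength τ := by
  obtain ⟨J, -, hJ, hcard⟩ := exists_setoid_le_card_quotient_add_permLength σ τ le_rfl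
  have hle := Setoid.card_quotient_le_of_le hJ
  rw [← numCycles_eq_card_quotient] at hcard hle
  have := permLength_add_numCycles (σ * τ)
  have := permLength_add_numCycles τ
  omega

theorem SameCycle.mul_left_of_permLength_mul_eq {σ τ : Perm β} {x y : β}
    (h : permLength (σ * τ) = permLength σ + permLength τ) (hxy : τ.SameCycle x y) :
    (σ * τ).SameCycle x y := by
  obtain ⟨J, hτJ, hJ, hcard⟩ := exists_setoid_le_card_quotient_add_permLength σ τ le_rfl
  have hle := Setoid.card_quotient_le_of_le hJ
  rw [← numCycles_eq_card_quotient] at hcard hle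
  have := permLength_add_numCycles (σ * τ)
  have := permLength_add_numCycles τ
  have hJeq : SameCycle.setoid (σ * τ) = J :=
    Setoid.eq_of_le_of_card_quotient_eq hJ (by rw [← numCycles_eq_card_quotient]; omega)
  change SameCycle.setoid (σ * τ) x y
  exact hJeq ▸ hτJ hxy

theorem numCycles_inv (σ : Perm β) : numCycles σ⁻¹ = numCycles σ := by
  rw [numCycles, numCycles, cycleType_inv, support_inv]

theorem permLength_inv (σ : Perm β) : permLength σ⁻¹ = permLength σ := by
  rw [permLength, permLength, numCycles_inv]

theorem SameCycle.mul_right_of_permLength_mul_eq {σ τ : Perm β} {x y : β}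
    (h : permLength (σ * τ) = permLength σ + permLength τ) (hxy : σ.SameCycle x y) :
    (σ * τ).SameCycle x y := by
  rw [← sameCycle_inv, mul_inv_rev]
  refine SameCycle.mul_left_of_permLength_mul_eq ?_ (sameCycle_inv.2 hxy)
  rw [← mul_inv_rev, permLength_inv, permLength_inv, permLength_inv, h, add_comm]

theorem permLength_finRotate (n : ℕ) : permLength (finRotate n) = n - 1 := by
  match n with
  | 0 => simp [permLength]
  | 1 => simp [permLength, numCycles]
  | n + 2 => simp [permLength, numCycles, cycleType_finRotate, support_finRotate]

-- `permLength` is the word metric of the Cayley graph of `Perm β` generated by transpositions.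
def OnGeodesic (σ c : Perm β) : Prop :=
  permLength σ + permLength (σ⁻¹ * c) = permLength c

theorem OnGeodesic.sameCycle {σ c : Perm β} (h : OnGeodesic σ c) {x y : β}
    (hxy : σ.SameCycle x y) : c.SameCycle x y := by
  simpa using SameCycle.mul_right_of_permLength_mul_eq (τ := σ⁻¹ * c)
    (by rw [mul_inv_cancel_left]; exact h.symm) hxy

section SumCongr

variable {γ δ : Type*} [Fintype γ] [DecidableEq γ] [Fintype δ] [DecidableEq δ]

theorem numCycles_sumCongr (f : Perm γ) (g : Perm δ) :
    numCycles (sumCongr f g) = numCycles f + numCycles g := by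
  let q := Sum.map (Quotient.mk (SameCycle.setoid f)) (Quotient.mk (SameCycle.setoid g))
  have hq : Function.Surjective q :=
    Sum.map_surjective.2 ⟨Quotient.mk_surjective, Quotient.mk_surjective⟩
  have hker : SameCycle.setoid (sumCongr f g) = Setoid.ker q := by
    ext (x | x) (y | y) <;> simp [Setoid.ker_def, q, Quotient.eq]
    exact fun h => not_sameCycle_sumCongr_inl_inr h.symm
  rw [numCycles_eq_card_quotient, hker, Nat.card_congr (Setoid.quotientKerEquivOfSurjective q hq),
    Nat.card_sum, numCycles_eq_card_quotient, numCycles_eq_card_quotient]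

theorem permLength_sumCongr (f : Perm γ) (g : Perm δ) :
    permLength (sumCongr f g) = permLength f + permLength g := by
  have := permLength_add_numCycles (sumCongr f g)
  have := permLength_add_numCycles f
  have := permLength_add_numCycles g
  rw [numCycles_sumCongr, Fintype.card_sum] at *
  omega

theorem OnGeodesic.exists_sumCongr {σ : Perm (γ ⊕ δ)} {c : Perm γ} {d : Perm δ}
    (h : OnGeodesic σ (sumCongr c d)) : ∃ f g, σ = sumCongr f g := by
  have hmaps : Set.MapsTo σ (Set.range Sum.inl) (Set.range Sum.inl) := by
    rintro _ ⟨x, rfl⟩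
    have hx := h.sameCycle (sameCycle_apply_right.2 (SameCycle.refl σ (.inl x)))
    rcases hσx : σ (.inl x) with y | y
    · exact ⟨y, rfl⟩
    · exact absurd (hσx ▸ hx) not_sameCycle_sumCongr_inl_inr
  obtain ⟨⟨f, g⟩, hfg⟩ := mem_sumCongrHom_range_of_perm_mapsTo_inl hmaps
  exact ⟨f, g, hfg.symm⟩

theorem onGeodesic_sumCongr_iff {f c : Perm γ} {g d : Perm δ} :
    OnGeodesic (sumCongr f g) (sumCongr c d) ↔ OnGeodesic f c ∧ OnGeodesic g d := by
  have hc := permLength_mul_le f (f⁻¹ * c)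
  have hd := permLength_mul_le g (g⁻¹ * d)
  rw [mul_inv_cancel_left] at hc hd
  simp only [OnGeodesic, sumCongr_inv, sumCongr_mul, permLength_sumCongr]
  omega

end SumCongr

end Equiv.Perm

theorem geodesic_to_gammaTwo_general (p : ℕ) :
    permLength (gammaTwo p) = 2 * p - 2 ∧
    ∀ α : Perm (Fin p ⊕ Fin p),
      permLength α + permLength ((gammaTwo p)⁻¹ * α) = 2 * p - 2 ↔
      ∃ α' α'' : Perm (Fin p), α = Equiv.sumCongr α' α'' ∧
        permLength α' + permLength (α'⁻¹ * (finRotate p)⁻¹)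
          = permLength ((finRotate p)⁻¹) ∧
        permLength α'' + permLength (α''⁻¹ * (finRotate p)⁻¹)
          = permLength ((finRotate p)⁻¹) ∧
        numCycles α = numCycles α' + numCycles α'' := by
  have hγ : permLength (gammaTwo p) = 2 * p - 2 := by
    rw [gammaTwo, permLength_sumCongr, permLength_inv, permLength_finRotate]
    omega
  refine ⟨hγ, fun α => ?_⟩
  rw [← permLength_inv ((gammaTwo p)⁻¹ * α), mul_inv_rev, inv_inv, ← hγ]
  change OnGeodesic α (gammaTwo p) ↔
    ∃ α' α'', α = Equiv.sumCongr α' α'' ∧ OnGeodesic α' _ ∧ OnGeodesic α'' _ ∧ _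
  constructor
  · intro h
    obtain ⟨α', α'', rfl⟩ := h.exists_sumCongr
    obtain ⟨h', h''⟩ := onGeodesic_sumCongr_iff.1 h
    exact ⟨α', α'', rfl, h', h'', numCycles_sumCongr α' α''⟩
  · rintro ⟨α', α'', rfl, h', h'', -⟩
    exact onGeodesic_sumCongr_iff.2 ⟨h', h''⟩

/-- `|α| + |γ₂⁻¹α| = |γ₂| = 2p−2` iff `α = α' ⊕ α''` with `α', α''` on the geodesics
from the identity to the respective `p`-cycles; in that case `#α = #α' + #α''`. -/
theorem geodesic_to_gammaTwo (p : ℕ) (hp : 0 < p) :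
    permLength (gammaTwo p) = 2 * p - 2 ∧
    ∀ α : Perm (Fin p ⊕ Fin p),
      permLength α + permLength ((gammaTwo p)⁻¹ * α) = 2 * p - 2 ↔
      ∃ α' α'' : Perm (Fin p), α = Equiv.sumCongr α' α'' ∧
        permLength α' + permLength (α'⁻¹ * (finRotate p)⁻¹)
          = permLength ((finRotate p)⁻¹) ∧
        permLength α'' + permLength (α''⁻¹ * (finRotate p)⁻¹)
          = permLength ((finRotate p)⁻¹) ∧
        numCycles α = numCycles α' + numCycles α'' :=
  geodesic_to_gammaTwo_general p
end
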